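/- Let Ω be a Reinhardt domain in ℂⁿ such that the Bergman kernel satisfies K(z,z) ≠ 0 for all z ∈ Ω, let J ∈ ℤⁿ, and let φ ∈ L^∞(Ω). Then the Berezin transform of the J-th quasi-homogeneous component of φ equals the J-th quasi-homogeneous component of the Berezin transform of φ: (φ_J)~ = (φ̃)_J on Ω. -/

import Mathlib

open MeasureTheory Complex Filter Topology Metric

noncomputable section

/-- `ℂⁿ`. -/
abbrev Cn (n : ℕ) := Fin n → ℂ

/-- The coordinatewise (torus/polydisc) action `ξ ⋄ z`. -/
def torusSMul {n : ℕ} (ξ z : Cn n) : Cn n := fun i => ξ i * z i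

/-- The unit torus `𝕋ⁿ`. -/
def unitTorus (n : ℕ) : Set (Cn n) := {ξ | ∀ i, ‖ξ i‖ = 1}

/-- A set `Ω ⊆ ℂⁿ` is Reinhardt if `ξ ⋄ z ∈ Ω` whenever `z ∈ Ω` and `ξ ∈ 𝕋ⁿ`. -/
def IsReinhardt {n : ℕ} (Ω : Set (Cn n)) : Prop :=
  ∀ z ∈ Ω, ∀ ξ ∈ unitTorus n, torusSMul ξ z ∈ Ω

/-- A set `Ω ⊆ ℂⁿ` is complete Reinhardt if `λ ⋄ z ∈ Ω` whenever `z ∈ Ω` and `λ ∈ 𝔻ⁿ`. -/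
def IsCompleteReinhardt {n : ℕ} (Ω : Set (Cn n)) : Prop :=
  ∀ z ∈ Ω, ∀ l : Cn n, (∀ i, ‖l i‖ < 1) → torusSMul l z ∈ Ω

/-- Lebesgue measure restricted to `Ω`. -/
abbrev restVol {n : ℕ} (Ω : Set (Cn n)) : Measure (Cn n) := volume.restrict Ω

/-- The subspace of `L²(Ω)` of functions having a holomorphic representative on `Ω`. -/
def holoSub {n : ℕ} (Ω : Set (Cn n)) : Submodule ℂ (Lp ℂ 2 (restVol Ω)) where
  carrier := {f | ∃ g : Cn n → ℂ, DifferentiableOn ℂ g Ω ∧ ∀ᵐ z ∂(restVol Ω), f z = g z}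
  add_mem' := by
    rintro f g ⟨gf, hgf, hf⟩ ⟨gg, hgg, hg⟩
    refine ⟨gf + gg, hgf.add hgg, ?_⟩
    filter_upwards [hf, hg, Lp.coeFn_add f g] with z h1 h2 h3
    rw [h3, Pi.add_apply, h1, h2]; rfl
  zero_mem' := by
    refine ⟨0, differentiableOn_const 0, ?_⟩
    filter_upwards [Lp.coeFn_zero ℂ 2 (restVol _)] with z hz
    simpa using hz
  smul_mem' := by
    rintro c f ⟨gf, hgf, hf⟩
    refine ⟨c • gf, hgf.const_smul c, ?_⟩
    filter_upwards [hf, Lp.coeFn_smul c f] with z h1 h2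
    rw [h2, Pi.smul_apply, h1]; rfl

/-- The Bergman space `A²(Ω)`, the closed subspace of `L²(Ω)` of (a.e. equivalence
classes of) square-integrable holomorphic functions on `Ω`. -/
def A2 {n : ℕ} (Ω : Set (Cn n)) : Submodule ℂ (Lp ℂ 2 (restVol Ω)) :=
  (holoSub Ω).topologicalClosure

instance A2.instCompleteSpace {n : ℕ} (Ω : Set (Cn n)) : CompleteSpace (A2 Ω) :=
  (Submodule.isClosed_topologicalClosure _).completeSpace_coe

/-- The Bergman projection, i.e. the orthogonal projection of `L²(Ω)` onto `A²(Ω)`. -/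
def bergmanProj {n : ℕ} (Ω : Set (Cn n)) : Lp ℂ 2 (restVol Ω) →L[ℂ] A2 Ω :=
  Submodule.orthogonalProjectionOnto (A2 Ω)

/-- `T` is the Toeplitz operator with symbol `φ` on `A²(Ω)`: `T f = P (φ f)`. -/
def IsToeplitz {n : ℕ} (Ω : Set (Cn n)) (φ : Cn n → ℂ) (T : A2 Ω →L[ℂ] A2 Ω) : Prop :=
  ∀ f : A2 Ω, ∃ hm : MemLp (fun z => φ z * (f : Lp ℂ 2 (restVol Ω)) z) 2 (restVol Ω),
    T f = bergmanProj Ω (hm.toLp _)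

/-- `H` is the Hankel operator with symbol `φ`: `H f = (I - P)(φ f)`. -/
def IsHankel {n : ℕ} (Ω : Set (Cn n)) (φ : Cn n → ℂ)
    (H : A2 Ω →L[ℂ] Lp ℂ 2 (restVol Ω)) : Prop :=
  ∀ f : A2 Ω, ∃ hm : MemLp (fun z => φ z * (f : Lp ℂ 2 (restVol Ω)) z) 2 (restVol Ω),
    H f = hm.toLp _ - (bergmanProj Ω (hm.toLp _) : Lp ℂ 2 (restVol Ω))

/-- `Kf` is the Bergman kernel of `Ω`: for each `z ∈ Ω`, `Kf (·, z)` is a holomorphic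
square-integrable function reproducing at `z` the values of all functions in `A²(Ω)`. -/
def IsBergmanKernel {n : ℕ} (Ω : Set (Cn n)) (Kf : Cn n → Cn n → ℂ) : Prop :=
  ∀ z ∈ Ω, DifferentiableOn ℂ (fun w => Kf w z) Ω ∧
    ∃ hm : MemLp (fun w => Kf w z) 2 (restVol Ω),
      ∀ (g : Cn n → ℂ) (hg : MemLp g 2 (restVol Ω)), DifferentiableOn ℂ g Ω →
        g z = (inner ℂ (hm.toLp _) (hg.toLp g) : ℂ)

/-- The Bergman kernel is positive on the diagonal of `Ω` (automatic for bounded domains). -/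
def KernelDiagPos {n : ℕ} (Ω : Set (Cn n)) (Kf : Cn n → Cn n → ℂ) : Prop :=
  ∀ z ∈ Ω, (Kf z z).im = 0 ∧ 0 < (Kf z z).re

/-- `k` is the family of normalized Bergman kernels `k_z = K(·,z)/√K(z,z)`, as elements
of `A²(Ω)`. -/
def IsNormalizedKernel {n : ℕ} (Ω : Set (Cn n)) (Kf : Cn n → Cn n → ℂ)
    (k : Cn n → A2 Ω) : Prop :=
  ∀ z ∈ Ω, ∀ᵐ w ∂(restVol Ω),
    (k z : Lp ℂ 2 (restVol Ω)) w = Kf w z / (Real.sqrt ((Kf z z).re) : ℂ)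

/-- The Berezin transform of a bounded operator `T` on `A²(Ω)`: `T̃(z) = ⟨T k_z, k_z⟩`
(in the mathematicians' convention; `inner` below is conjugate-linear in the first slot). -/
def berezinOp {n : ℕ} {Ω : Set (Cn n)} (k : Cn n → A2 Ω) (T : A2 Ω →L[ℂ] A2 Ω)
    (z : Cn n) : ℂ :=
  inner ℂ ((k z : Lp ℂ 2 (restVol Ω))) ((T (k z) : Lp ℂ 2 (restVol Ω)))

/-- `F(z) → 0` as `z → bΩ` (`z` ranging over `Ω`). -/
def BoundaryVanish {X E : Type*} [TopologicalSpace X] [TopologicalSpace E] [Zero E]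
    (Ω : Set X) (F : X → E) : Prop :=
  ∀ p ∈ frontier Ω, Tendsto F (nhdsWithin p Ω) (nhds 0)

/-- `ξ^J` for a multi-index `J ∈ ℤⁿ`. -/
def tpow {n : ℕ} (ξ : Cn n) (J : Fin n → ℤ) : ℂ := ∏ i, ξ i ^ J i

/-- The average of `g` over the unit torus `𝕋ⁿ` with respect to the normalized Haar
measure `σ` (`σ(𝕋ⁿ) = 1`). -/
def torusAvg (n : ℕ) (g : Cn n → ℂ) : ℂ :=
  (((2 * Real.pi) ^ n)⁻¹ : ℝ) •
    ∫ θ in (Set.univ.pi fun _ : Fin n => Set.Ioc (0 : ℝ) (2 * Real.pi)),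
      g (fun i => Complex.exp ((θ i : ℂ) * Complex.I))

/-- The `J`-th quasi-homogeneous component `f_J(z) = ∫_{𝕋ⁿ} f(ξ ⋄ z) ξ̄^J dσ(ξ)`. -/
def qhComp {n : ℕ} (J : Fin n → ℤ) (f : Cn n → ℂ) (z : Cn n) : ℂ :=
  torusAvg n (fun ξ => f (torusSMul ξ z) * (starRingEnd ℂ) (tpow ξ J))

/-- `φ` is quasi-homogeneous of multidegree `J`: `φ(ξ ⋄ z) = ξ^J φ(z)` for a.e. `z ∈ Ω`
and every `ξ ∈ 𝕋ⁿ`. -/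
def IsQuasiHomogeneous {n : ℕ} (Ω : Set (Cn n)) (J : Fin n → ℤ) (φ : Cn n → ℂ) : Prop :=
  ∀ ξ ∈ unitTorus n, ∀ᵐ z ∂(restVol Ω), φ (torusSMul ξ z) = tpow ξ J * φ z

/-- The Berezin transform of a symbol `φ`:
`φ̃(z) = ∫_Ω φ(w) |K(w,z)|²/K(z,z) dV(w)`. -/
def berezinFn {n : ℕ} (Ω : Set (Cn n)) (Kf : Cn n → Cn n → ℂ) (φ : Cn n → ℂ)
    (z : Cn n) : ℂ :=
  (∫ w in Ω, φ w * (Complex.ofReal (‖Kf w z‖ ^ 2))) / Kf z z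

/-! Torus rotations `z ↦ ξ ⋄ z` preserve a Reinhardt domain and its Lebesgue measure, so the
rotated kernel `K(ξ ⋄ ·, ξ ⋄ z)` also reproduces at `z`; by uniqueness of the reproducing kernel,
`K(ξ ⋄ w, ξ ⋄ z) = K(w, z)`. Hence `φ̃(ξ ⋄ z)` is the Berezin transform of `φ(ξ ⋄ ·)` at `z`, and
the theorem becomes an exchange of the torus average with the integral over `Ω`, which Fubini
allows because `φ` is bounded and `|K(·, z)|²` is integrable. -/

lemma inner_toLp_eq_integral {α 𝕜 : Type*} [MeasurableSpace α] [RCLike 𝕜] {μ : Measure α}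
    {f g : α → 𝕜} (hf : MemLp f 2 μ) (hg : MemLp g 2 μ) :
    inner 𝕜 (hf.toLp f) (hg.toLp g) = ∫ a, (starRingEnd 𝕜) (f a) * g a ∂μ := by
  rw [L2.inner_def]
  refine integral_congr_ae ?_
  filter_upwards [hf.coeFn_toLp, hg.coeFn_toLp] with a hfa hga
  rw [hfa, hga, RCLike.inner_apply, mul_comm]

section TorusAction

variable {n : ℕ} {ξ : Cn n}

lemma ne_zero_of_mem_unitTorus (hξ : ξ ∈ unitTorus n) (i : Fin n) : ξ i ≠ 0 :=
  norm_ne_zero_iff.mp (by rw [hξ i]; exact one_ne_zero)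

lemma inv_mem_unitTorus (hξ : ξ ∈ unitTorus n) : ξ⁻¹ ∈ unitTorus n := fun i => by
  simp [hξ i]

lemma torusSMul_inv_torusSMul (hξ : ξ ∈ unitTorus n) (z : Cn n) :
    torusSMul ξ⁻¹ (torusSMul ξ z) = z :=
  funext fun i => inv_mul_cancel_left₀ (ne_zero_of_mem_unitTorus hξ i) (z i)

lemma torusSMul_torusSMul_inv (hξ : ξ ∈ unitTorus n) (z : Cn n) :
    torusSMul ξ (torusSMul ξ⁻¹ z) = z :=
  funext fun i => mul_inv_cancel_left₀ (ne_zero_of_mem_unitTorus hξ i) (z i)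

lemma differentiable_torusSMul (ξ : Cn n) : Differentiable ℂ (torusSMul ξ) :=
  differentiable_pi.mpr fun i => (differentiable_apply i).const_mul (ξ i)

def torusSMulEquiv (hξ : ξ ∈ unitTorus n) : Cn n ≃ᵐ Cn n where
  toFun := torusSMul ξ
  invFun := torusSMul ξ⁻¹
  left_inv := torusSMul_inv_torusSMul hξ
  right_inv := torusSMul_torusSMul_inv hξ
  measurable_toFun := (differentiable_torusSMul ξ).continuous.measurable
  measurable_invFun := (differentiable_torusSMul ξ⁻¹).continuous.measurable

lemma measurePreserving_torusSMul (hξ : ξ ∈ unitTorus n) :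
    MeasurePreserving (torusSMul ξ) volume volume :=
  measurePreserving_pi _ _ fun i =>
    (rotation (⟨ξ i, by simp [Submonoid.unitSphere, hξ i]⟩ : Circle)).measurePreserving

lemma norm_tpow (hξ : ξ ∈ unitTorus n) (J : Fin n → ℤ) : ‖tpow ξ J‖ = 1 := by
  simp only [tpow, norm_prod, norm_zpow, hξ _, one_zpow, Finset.prod_const_one]

end TorusAction

namespace IsReinhardt

variable {n : ℕ} {Ω : Set (Cn n)} {ξ : Cn n}

lemma preimage_torusSMul (hΩ : IsReinhardt Ω) (hξ : ξ ∈ unitTorus n) :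
    torusSMul ξ ⁻¹' Ω = Ω := by
  refine Set.Subset.antisymm (fun z hz => ?_) fun z hz => hΩ z hz ξ hξ
  simpa only [torusSMul_inv_torusSMul hξ] using hΩ _ hz _ (inv_mem_unitTorus hξ)

lemma measurePreserving_torusSMul (hΩ : IsReinhardt Ω) (hΩm : MeasurableSet Ω)
    (hξ : ξ ∈ unitTorus n) : MeasurePreserving (torusSMul ξ) (restVol Ω) (restVol Ω) := by
  simpa only [hΩ.preimage_torusSMul hξ] using
    (_root_.measurePreserving_torusSMul hξ).restrict_preimage hΩm

lemma integral_comp_torusSMul (hΩ : IsReinhardt Ω) (hΩm : MeasurableSet Ω)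
    (hξ : ξ ∈ unitTorus n) (f : Cn n → ℂ) :
    ∫ w in Ω, f (torusSMul ξ w) = ∫ w in Ω, f w :=
  (hΩ.measurePreserving_torusSMul hΩm hξ).integral_comp
    (torusSMulEquiv hξ).measurableEmbedding f

lemma quasiMeasurePreserving_torusSMul (hΩ : IsReinhardt Ω) (hΩm : MeasurableSet Ω)
    {P : Type*} [MeasurableSpace P] (ν : Measure P) [SFinite ν] {ξ : P → Cn n}
    (hξm : Measurable ξ) (hξ : ∀ p, ξ p ∈ unitTorus n) :
    Measure.QuasiMeasurePreserving (fun p : P × Cn n => torusSMul (ξ p.1) p.2)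
      (ν.prod (restVol Ω)) (restVol Ω) := by
  set Ψ : P × Cn n → Cn n := fun p => torusSMul (ξ p.1) p.2
  have hm : Measurable Ψ :=
    measurable_pi_lambda _ fun i =>
      ((measurable_pi_apply i).comp (hξm.comp measurable_fst)).mul
        ((measurable_pi_apply i).comp measurable_snd)
  refine ⟨hm, Measure.AbsolutelyContinuous.mk fun s hs hs0 => ?_⟩
  have hslice : ∀ p, restVol Ω (Prod.mk p ⁻¹' (Ψ ⁻¹' s)) = 0 := fun p =>
    ((hΩ.measurePreserving_torusSMul hΩm (hξ p)).measure_preimage hs.nullMeasurableSet).trans hs0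
  rw [Measure.map_apply hm hs, Measure.prod_apply (hm hs)]
  simp [hslice]

end IsReinhardt

section Reproducing

variable {n : ℕ} {Ω : Set (Cn n)} {z : Cn n}

/-- Stated so that `(hK z hz).2 : ReproducesAt Ω z (Kf · z)` for `hK : IsBergmanKernel Ω Kf`. -/
def ReproducesAt (Ω : Set (Cn n)) (z : Cn n) (k : Cn n → ℂ) : Prop :=
  ∃ hk : MemLp k 2 (restVol Ω), ∀ (g : Cn n → ℂ) (hg : MemLp g 2 (restVol Ω)),
    DifferentiableOn ℂ g Ω → g z = (inner ℂ (hk.toLp _) (hg.toLp g) : ℂ)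

lemma ReproducesAt.eqOn (hΩ : IsOpen Ω) {k₁ k₂ : Cn n → ℂ} (h₁ : ReproducesAt Ω z k₁)
    (h₂ : ReproducesAt Ω z k₂) (hd₁ : DifferentiableOn ℂ k₁ Ω) (hd₂ : DifferentiableOn ℂ k₂ Ω) :
    Set.EqOn k₁ k₂ Ω := by
  obtain ⟨hm₁, hr₁⟩ := h₁
  obtain ⟨hm₂, hr₂⟩ := h₂
  have hm := hm₁.sub hm₂
  have hd := hd₁.sub hd₂
  -- `‖k₁ - k₂‖² = ⟨k₁, k₁ - k₂⟩ - ⟨k₂, k₁ - k₂⟩ = (k₁ - k₂)(z) - (k₁ - k₂)(z)`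
  have hzero : hm₁.toLp k₁ - hm₂.toLp k₂ = 0 := by
    refine inner_self_eq_zero (𝕜 := ℂ).mp ?_
    rw [inner_sub_left, ← MemLp.toLp_sub, ← hr₁ _ hm hd, ← hr₂ _ hm hd, sub_self]
  have hae : k₁ =ᵐ[restVol Ω] k₂ := (MemLp.toLp_eq_toLp_iff hm₁ hm₂).mp (sub_eq_zero.mp hzero)
  exact Measure.eqOn_open_of_ae_eq hae hΩ hd₁.continuousOn hd₂.continuousOn

lemma IsReinhardt.reproducesAt_comp_torusSMul (hΩ : IsReinhardt Ω) (hΩo : IsOpen Ω)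
    {ξ : Cn n} (hξ : ξ ∈ unitTorus n) {k : Cn n → ℂ} (hk : ReproducesAt Ω (torusSMul ξ z) k) :
    ReproducesAt Ω z (k ∘ torusSMul ξ) := by
  obtain ⟨hm, hr⟩ := hk
  have hξ' := inv_mem_unitTorus hξ
  refine ⟨hm.comp_measurePreserving (hΩ.measurePreserving_torusSMul hΩo.measurableSet hξ),
    fun g hg hgd => ?_⟩
  have hg' : MemLp (g ∘ torusSMul ξ⁻¹) 2 (restVol Ω) :=
    hg.comp_measurePreserving (hΩ.measurePreserving_torusSMul hΩo.measurableSet hξ')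
  have hgd' : DifferentiableOn ℂ (g ∘ torusSMul ξ⁻¹) Ω :=
    hgd.comp (differentiable_torusSMul _).differentiableOn fun w hw => hΩ w hw _ hξ'
  calc g z = g (torusSMul ξ⁻¹ (torusSMul ξ z)) := by rw [torusSMul_inv_torusSMul hξ]
    _ = ∫ u in Ω, (starRingEnd ℂ) (k u) * g (torusSMul ξ⁻¹ u) :=
      (hr _ hg' hgd').trans (inner_toLp_eq_integral _ _)
    _ = ∫ w in Ω, (starRingEnd ℂ) (k (torusSMul ξ w)) * g w := by
      rw [← hΩ.integral_comp_torusSMul hΩo.measurableSet hξ]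
      simp only [torusSMul_inv_torusSMul hξ]
    _ = _ := (inner_toLp_eq_integral _ _).symm

end Reproducing

namespace IsBergmanKernel

variable {n : ℕ} {Ω : Set (Cn n)} {Kf : Cn n → Cn n → ℂ} {ξ z : Cn n}

lemma apply_torusSMul (hK : IsBergmanKernel Ω Kf) (hΩo : IsOpen Ω) (hΩ : IsReinhardt Ω)
    (hξ : ξ ∈ unitTorus n) {w : Cn n} (hw : w ∈ Ω) (hz : z ∈ Ω) :
    Kf (torusSMul ξ w) (torusSMul ξ z) = Kf w z := by
  obtain ⟨hdξ, hrξ⟩ := hK _ (hΩ z hz ξ hξ)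
  obtain ⟨hd, hr⟩ := hK z hz
  exact ReproducesAt.eqOn hΩo (hΩ.reproducesAt_comp_torusSMul hΩo hξ hrξ) hr
    (hdξ.comp (differentiable_torusSMul ξ).differentiableOn fun w hw => hΩ w hw ξ hξ) hd hw

lemma berezinFn_torusSMul (hK : IsBergmanKernel Ω Kf) (hΩo : IsOpen Ω) (hΩ : IsReinhardt Ω)
    (φ : Cn n → ℂ) (hξ : ξ ∈ unitTorus n) (hz : z ∈ Ω) :
    berezinFn Ω Kf φ (torusSMul ξ z) = berezinFn Ω Kf (φ ∘ torusSMul ξ) z := by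
  rw [berezinFn, berezinFn, hK.apply_torusSMul hΩo hΩ hξ hz hz,
    ← hΩ.integral_comp_torusSMul hΩo.measurableSet hξ]
  congr 1
  refine setIntegral_congr_fun hΩo.measurableSet fun w hw => ?_
  simp only [Function.comp_apply, hK.apply_torusSMul hΩo hΩ hξ hw hz]

end IsBergmanKernel

section TorusAverage

variable {n : ℕ}

def torusParam (θ : Fin n → ℝ) : Cn n := fun i => Complex.exp ((θ i : ℂ) * Complex.I)

def torusBox (n : ℕ) : Set (Fin n → ℝ) := Set.univ.pi fun _ => Set.Ioc 0 (2 * Real.pi)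

lemma torusAvg_eq_integral (g : Cn n → ℂ) :
    torusAvg n g = (((2 * Real.pi) ^ n)⁻¹ : ℝ) • ∫ θ in torusBox n, g (torusParam θ) :=
  rfl

lemma torusParam_mem_unitTorus (θ : Fin n → ℝ) : torusParam θ ∈ unitTorus n :=
  fun i => Complex.norm_exp_ofReal_mul_I (θ i)

lemma continuous_torusParam : Continuous (torusParam (n := n)) :=
  continuous_pi fun i => Complex.continuous_exp.comp
    ((Complex.continuous_ofReal.comp (continuous_apply i)).mul continuous_const)

instance : IsFiniteMeasure (volume.restrict (torusBox n)) :=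
  isFiniteMeasure_restrict.mpr <|
    ((isCompact_univ_pi fun _ => isCompact_Icc).measure_lt_top.trans_le' <|
      measure_mono <| Set.pi_mono fun _ _ => Set.Ioc_subset_Icc_self).ne

lemma torusAvg_congr {f g : Cn n → ℂ} (h : ∀ ξ ∈ unitTorus n, f ξ = g ξ) :
    torusAvg n f = torusAvg n g := by
  simp only [torusAvg_eq_integral, h _ (torusParam_mem_unitTorus _)]

lemma torusAvg_mul_const (f : Cn n → ℂ) (c : ℂ) :
    torusAvg n (fun ξ => f ξ * c) = torusAvg n f * c := by
  rw [torusAvg_eq_integral, torusAvg_eq_integral, integral_mul_const, smul_mul_assoc]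

lemma torusAvg_div_const (f : Cn n → ℂ) (c : ℂ) :
    torusAvg n (fun ξ => f ξ / c) = torusAvg n f / c := by
  simp only [div_eq_mul_inv, torusAvg_mul_const]

lemma torusAvg_integral_comm {X : Type*} [MeasurableSpace X] {μ : Measure X} [SFinite μ]
    {F : Cn n → X → ℂ}
    (hF : Integrable (fun p : (Fin n → ℝ) × X => F (torusParam p.1) p.2)
      ((volume.restrict (torusBox n)).prod μ)) :
    torusAvg n (fun ξ => ∫ w, F ξ w ∂μ) = ∫ w, torusAvg n (fun ξ => F ξ w) ∂μ := by
  simp only [torusAvg_eq_integral]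
  rw [integral_smul, integral_integral_swap hF]

end TorusAverage

namespace IsReinhardt

variable {n : ℕ} {Ω : Set (Cn n)} {φ ψ : Cn n → ℂ}

lemma integrable_torusSMul_mul (hΩ : IsReinhardt Ω) (hΩm : MeasurableSet Ω) (J : Fin n → ℤ)
    (hφ : MemLp φ ⊤ (restVol Ω)) (hψ : Integrable ψ (restVol Ω)) :
    Integrable (fun p : (Fin n → ℝ) × Cn n =>
        φ (torusSMul (torusParam p.1) p.2) * (starRingEnd ℂ) (tpow (torusParam p.1) J) * ψ p.2)
      ((volume.restrict (torusBox n)).prod (restVol Ω)) := by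
  have hqmp := hΩ.quasiMeasurePreserving_torusSMul hΩm (volume.restrict (torusBox n))
    continuous_torusParam.measurable torusParam_mem_unitTorus
  have htpow : Continuous fun θ : Fin n → ℝ => (starRingEnd ℂ) (tpow (torusParam θ) J) :=
    Complex.continuous_conj.comp <| continuous_finsetProd _ fun i _ =>
      ((continuous_apply i).comp continuous_torusParam).zpow₀ _
        fun θ => Or.inl (Complex.exp_ne_zero _)
  have hbound : ∀ᵐ p ∂(volume.restrict (torusBox n)).prod (restVol Ω),
      ‖φ (torusSMul (torusParam p.1) p.2) * (starRingEnd ℂ) (tpow (torusParam p.1) J)‖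
        ≤ lpNorm φ ⊤ (restVol Ω) := by
    filter_upwards [hqmp.ae (ae_le_lpNorm_exponent_top hφ)] with p hp
    rwa [norm_mul, Complex.norm_conj, norm_tpow (torusParam_mem_unitTorus _), mul_one]
  simpa only [one_mul, Pi.mul_apply, Function.comp_apply] using
    ((integrable_const (1 : ℂ)).mul_prod hψ).bdd_mul
      ((hφ.aestronglyMeasurable.comp_quasiMeasurePreserving hqmp).mul
        (htpow.comp continuous_fst).aestronglyMeasurable) hbound

lemma integral_qhComp_mul (hΩ : IsReinhardt Ω) (hΩm : MeasurableSet Ω) (J : Fin n → ℤ)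
    (hφ : MemLp φ ⊤ (restVol Ω)) (hψ : Integrable ψ (restVol Ω)) :
    ∫ w in Ω, qhComp J φ w * ψ w =
      torusAvg n fun ξ => (∫ w in Ω, φ (torusSMul ξ w) * ψ w) * (starRingEnd ℂ) (tpow ξ J) := by
  simp only [qhComp, ← torusAvg_mul_const]
  rw [← torusAvg_integral_comm (hΩ.integrable_torusSMul_mul hΩm J hφ hψ)]
  simp only [← integral_mul_const, mul_right_comm _ (ψ _)]

end IsReinhardt

theorem berezin_qhComp_comm_general
    {n : ℕ} (Ω : Set (Cn n)) (hΩopen : IsOpen Ω)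
    (hΩRein : IsReinhardt Ω)
    (Kf : Cn n → Cn n → ℂ) (hKf : IsBergmanKernel Ω Kf)
    (J : Fin n → ℤ) (φ : Cn n → ℂ) (hφ : MemLp φ ⊤ (restVol Ω)) :
    ∀ z ∈ Ω, berezinFn Ω Kf (qhComp J φ) z = qhComp J (berezinFn Ω Kf φ) z := by
  intro z hz
  obtain ⟨-, hKm, -⟩ := hKf z hz
  have hK2 : Integrable (fun w => ((‖Kf w z‖ ^ 2 : ℝ) : ℂ)) (restVol Ω) :=
    (hKm.integrable_norm_pow two_ne_zero).ofReal
  rw [berezinFn, hΩRein.integral_qhComp_mul hΩopen.measurableSet J hφ hK2, qhComp,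
    ← torusAvg_div_const]
  refine torusAvg_congr fun ξ hξ => ?_
  rw [hKf.berezinFn_torusSMul hΩopen hΩRein φ hξ hz, berezinFn, div_mul_eq_mul_div]
  rfl

/-- Let `Ω ⊆ ℂⁿ` be a Reinhardt domain with `K(z,z) ≠ 0` on `Ω`,
`J ∈ ℤⁿ`, `φ ∈ L^∞(Ω)`. Then `(φ_J)~ = (φ̃)_J` on `Ω`. -/
theorem berezin_qhComp_comm
    {n : ℕ} (Ω : Set (Cn n)) (hΩopen : IsOpen Ω) (hΩconn : IsConnected Ω)
    (hΩRein : IsReinhardt Ω)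
    (Kf : Cn n → Cn n → ℂ) (hKf : IsBergmanKernel Ω Kf)
    (hKzz : ∀ z ∈ Ω, Kf z z ≠ 0)
    (J : Fin n → ℤ) (φ : Cn n → ℂ) (hφ : MemLp φ ⊤ (restVol Ω)) :
    ∀ z ∈ Ω, berezinFn Ω Kf (qhComp J φ) z = qhComp J (berezinFn Ω Kf φ) z :=
  berezin_qhComp_comm_general Ω hΩopen hΩRein Kf hKf J φ hφ

end
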